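/- Let Γ be a strictly Deza graph with parameters (n, k, b, a) with k = b + 1 and β(v) > 1 for every vertex v, and let β denote the common value of β(v). (1) If Γ contains a vertex of type (A1) or a vertex of type (C), then β + 1 divides k − 1. (2) If Γ contains a vertex of type (A2) or a vertex of type (B), then β + 1 divides k − β. -/

import Mathlib

open Finset SimpleGraph

universe u v

/-- The number of common neighbours of two vertices. -/
def commonNbrs {V : Type u} [Fintype V] [DecidableEq V] (G : SimpleGraph V)
    [DecidableRel G.Adj] (x y : V) : ℕ :=
  (G.neighborFinset x ∩ G.neighborFinset y).card

/-- `G` is a Deza graph with parameters `(n, k, b, a)`: a nonempty `k`-regular graph on `n`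
vertices in which any two distinct vertices have either `b` or `a` common neighbours,
where `b ≥ a`. -/
def IsDezaGraph {V : Type u} [Fintype V] [DecidableEq V] (G : SimpleGraph V)
    [DecidableRel G.Adj] (n k b a : ℕ) : Prop :=
  G ≠ ⊥ ∧ Fintype.card V = n ∧ G.IsRegularOfDegree k ∧ a ≤ b ∧
    ∀ x y : V, x ≠ y → commonNbrs G x y = b ∨ commonNbrs G x y = a

/-- `G` is a strictly Deza graph with parameters `(n, k, b, a)`: a Deza graph of
diameter 2 that is not strongly regular. -/
def IsStrictlyDezaGraph {V : Type u} [Fintype V] [DecidableEq V] (G : SimpleGraph V)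
    [DecidableRel G.Adj] (n k b a : ℕ) : Prop :=
  IsDezaGraph G n k b a ∧ G.Connected ∧ (∀ x y : V, G.dist x y ≤ 2) ∧
    (∃ x y : V, G.dist x y = 2) ∧ ¬ ∃ ℓ μ : ℕ, G.IsSRGWith n k ℓ μ

/-- `B(v)`: the set of vertices `u ≠ v` having exactly `b` common neighbours with `v`. -/
def dezaB {V : Type u} [Fintype V] [DecidableEq V] (G : SimpleGraph V)
    [DecidableRel G.Adj] (b : ℕ) (v : V) : Finset V :=
  univ.filter fun u => u ≠ v ∧ commonNbrs G u v = b

/-- `A(v)`: the set of vertices `u ≠ v` having exactly `a` common neighbours with `v`. -/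
def dezaA {V : Type u} [Fintype V] [DecidableEq V] (G : SimpleGraph V)
    [DecidableRel G.Adj] (a : ℕ) (v : V) : Finset V :=
  univ.filter fun u => u ≠ v ∧ commonNbrs G u v = a

/-- `B[v] = B(v) ∪ {v}`. -/
def dezaBc {V : Type u} [Fintype V] [DecidableEq V] (G : SimpleGraph V)
    [DecidableRel G.Adj] (b : ℕ) (v : V) : Finset V :=
  insert v (dezaB G b v)

/-- A vertex `v` is of type (A) if `B(v) ∩ N(v) = ∅`. -/
def IsTypeA {V : Type u} [Fintype V] [DecidableEq V] (G : SimpleGraph V)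
    [DecidableRel G.Adj] (b : ℕ) (v : V) : Prop :=
  dezaB G b v ∩ G.neighborFinset v = ∅

/-- A vertex `v` is of type (B) if `B(v) ⊆ N(v)`. -/
def IsTypeB {V : Type u} [Fintype V] [DecidableEq V] (G : SimpleGraph V)
    [DecidableRel G.Adj] (b : ℕ) (v : V) : Prop :=
  dezaB G b v ⊆ G.neighborFinset v

/-- A vertex `v` is of type (C) if `|B(v) ∩ N(v)| = 1`. -/
def IsTypeC {V : Type u} [Fintype V] [DecidableEq V] (G : SimpleGraph V)
    [DecidableRel G.Adj] (b : ℕ) (v : V) : Prop :=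
  (dezaB G b v ∩ G.neighborFinset v).card = 1

/-- A vertex `x` of type (A) is of type (A1) if there exists `y ∈ N(x)` with
`N(x) \ N(xᵢ) = {y}` for every `xᵢ ∈ B(x)`. -/
def IsTypeA1 {V : Type u} [Fintype V] [DecidableEq V] (G : SimpleGraph V)
    [DecidableRel G.Adj] (b : ℕ) (x : V) : Prop :=
  IsTypeA G b x ∧ ∃ y ∈ G.neighborFinset x,
    ∀ xi ∈ dezaB G b x, G.neighborFinset x \ G.neighborFinset xi = {y}

/-- A vertex `x` of type (A) is of type (A2) if there exists `z ∉ N[x]` with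
`N(xᵢ) \ N(x) = {z}` for every `xᵢ ∈ B(x)`. -/
def IsTypeA2 {V : Type u} [Fintype V] [DecidableEq V] (G : SimpleGraph V)
    [DecidableRel G.Adj] (b : ℕ) (x : V) : Prop :=
  IsTypeA G b x ∧ ∃ z ∉ insert x (G.neighborFinset x),
    ∀ xi ∈ dezaB G b x, G.neighborFinset xi \ G.neighborFinset x = {z}

/-- The complete multipartite graph with `m` parts of size `t`. -/
def completeMultipartiteGr (m t : ℕ) : SimpleGraph (Fin m × Fin t) where
  Adj u v := u.1 ≠ v.1
  symm := ⟨fun _ _ h => Ne.symm h⟩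
  loopless := ⟨fun _ h => h rfl⟩

/-- The 2-clique extension of a graph `H`: vertices `(u, i)` and `(v, j)` are adjacent
iff `u ~ v` in `H`, or `u = v` and `i ≠ j`. -/
def cliqueExt2 {W : Type v} (H : SimpleGraph W) : SimpleGraph (W × Fin 2) where
  Adj u v := H.Adj u.1 v.1 ∨ (u.1 = v.1 ∧ u.2 ≠ v.2)
  symm := by
    constructor
    intro u v h
    rcases h with h | ⟨h1, h2⟩
    · exact Or.inl h.symm
    · exact Or.inr ⟨h1.symm, h2.symm⟩
  loopless := by
    constructor
    intro u h
    rcases h with h | ⟨_, h2⟩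
    · exact H.loopless.irrefl _ h
    · exact h2 rfl

/-!
Since `k = b + 1`, two vertices `u, w` with `b` common neighbours have neighbourhoods that differ
by one swap, `N(u) = N(w) - p + q`. From this normal form one shows that for `k ≥ 3` the sets
`B[w] = B(w) ∪ {w}` are the classes of an equivalence relation, each of size `β + 1`.

Let `S` be the set of common neighbours of the class `B[x]`. A `b`-partner `w'` of some `w ∈ S`
could leave `S` only if its swap removed a vertex `p ∈ B[x]`; for each vertex type this is
impossible, so `S` is a union of classes and `β + 1 ∣ |S|`. For types (A1) and (C) every member of
`B[x]` has neighbourhood `S` plus one further vertex, so `|S| = k - 1`; for type (B) the class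
`B[x]` is a clique of twins with `S = N[x] \ B[x]`, and for type (A2) the vertices `xᵢ ∈ B(x)`
swap out pairwise distinct `yᵢ` from `N(x)` with `S = N(x) \ {yᵢ}`, so `|S| = k - β`.
-/

namespace Finset

variable {α : Type*} [DecidableEq α]

theorem dvd_card_of_blocks {S : Finset α} {m : ℕ} (cl : α → Finset α)
    (hmem : ∀ w ∈ S, w ∈ cl w) (hsub : ∀ w ∈ S, cl w ⊆ S)
    (hcl : ∀ w ∈ S, ∀ w' ∈ cl w, cl w' = cl w) (hcard : ∀ w ∈ S, (cl w).card = m) :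
    m ∣ S.card := by
  rw [card_eq_sum_card_image cl S]
  refine dvd_sum fun C hC => ?_
  obtain ⟨w, hw, rfl⟩ := mem_image.mp hC
  have hfiber : S.filter (fun u => cl u = cl w) = cl w := by
    ext u
    simp only [mem_filter]
    exact ⟨fun ⟨hu, h⟩ => h ▸ hmem u hu, fun hu => ⟨hsub w hw hu, hcl w hw u hu⟩⟩
  rw [hfiber, hcard w hw]

theorem eq_insert_erase_of_card_inter {s t : Finset α} {p q : α}
    (hst : (s ∩ t).card + 1 = s.card) (hts : t.card = s.card)
    (hp : p ∈ s) (hpt : p ∉ t) (hq : q ∈ t) (hqs : q ∉ s) : t = insert q (s.erase p) := by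
  have herase : s ∩ t = s.erase p := by
    refine eq_of_subset_of_card_le (fun v hv => ?_) ?_
    · exact mem_erase.mpr ⟨fun h => hpt (h ▸ (mem_inter.mp hv).2), (mem_inter.mp hv).1⟩
    · rw [card_erase_of_mem hp]; omega
  refine (eq_of_subset_of_card_le ?_ ?_).symm
  · exact insert_subset hq (herase ▸ inter_subset_right)
  · rw [card_insert_of_notMem fun h => hqs (mem_of_mem_erase h), card_erase_of_mem hp]
    omega

theorem mem_iff_mem_of_card_inter_insert_erase {A U : Finset α} {y z : α} (hy : y ∈ U)
    (hz : z ∉ U) (h : (A ∩ insert z (U.erase y)).card = (A ∩ U).card) : y ∈ A ↔ z ∈ A := by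
  have hyAU : y ∈ A → y ∈ A ∩ U := fun hyA => mem_inter.mpr ⟨hyA, hy⟩
  have hzAU : z ∉ A ∩ U := fun h => hz (mem_inter.mp h).2
  rw [insert_inter, inter_erase] at h
  by_cases hyA : y ∈ A <;> by_cases hzA : z ∈ A <;> simp only [hyA, hzA, if_true, if_false] at h ⊢
  · rw [card_erase_of_mem (hyAU hyA)] at h
    have := card_pos.mpr ⟨y, hyAU hyA⟩
    omega
  · rw [card_insert_of_notMem fun h => hzAU (mem_of_mem_erase h), erase_eq_of_notMem
      fun h => hyA (mem_inter.mp h).1] at h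
    omega

end Finset

theorem natCast_add_one_dvd_sub {β c j k : ℕ} (h : β + 1 ∣ c) (hc : c + j = k) :
    ((β : ℤ) + 1) ∣ (k : ℤ) - j := by
  rw [← hc, Nat.cast_add, add_sub_cancel_right]
  exact_mod_cast h

theorem mem_neighborFinset_comm {V : Type u} {G : SimpleGraph V} [Fintype V] [DecidableRel G.Adj]
    {u v : V} : u ∈ G.neighborFinset v ↔ v ∈ G.neighborFinset u := by
  simp [adj_comm]

section Deza

variable {V : Type u} [Fintype V] [DecidableEq V]

def commonNbhd (G : SimpleGraph V) [DecidableRel G.Adj] (K : Finset V) : Finset V :=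
  univ.filter fun w => K ⊆ G.neighborFinset w

variable {G : SimpleGraph V} [DecidableRel G.Adj] {n k b a β : ℕ}

@[simp]
theorem mem_commonNbhd {K : Finset V} {w : V} : w ∈ commonNbhd G K ↔ K ⊆ G.neighborFinset w := by
  simp [commonNbhd]

theorem notMem_of_mem_commonNbhd {K : Finset V} {w : V} (hw : w ∈ commonNbhd G K) : w ∉ K :=
  fun h => G.notMem_neighborFinset_self w (mem_commonNbhd.mp hw h)

theorem commonNbhd_subset_neighborFinset {K : Finset V} {m : V} (hm : m ∈ K) :
    commonNbhd G K ⊆ G.neighborFinset m :=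
  fun _ hw => mem_neighborFinset_comm.mp (mem_commonNbhd.mp hw hm)

theorem commonNbrs_comm (u v : V) : commonNbrs G u v = commonNbrs G v u := by
  rw [commonNbrs, commonNbrs, inter_comm]

@[simp]
theorem mem_dezaB {u v : V} : u ∈ dezaB G b v ↔ u ≠ v ∧ commonNbrs G u v = b := by
  simp [dezaB]

theorem mem_dezaB_comm {u v : V} : u ∈ dezaB G b v ↔ v ∈ dezaB G b u := by
  simp only [mem_dezaB, ne_comm, commonNbrs_comm u v]

theorem notMem_dezaB_self (v : V) : v ∉ dezaB G b v := by simp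

theorem self_mem_dezaBc (v : V) : v ∈ dezaBc G b v :=
  mem_insert_self v _

theorem card_dezaBc (hβc : ∀ v : V, (dezaB G b v).card = β) (v : V) :
    (dezaBc G b v).card = β + 1 := by
  rw [dezaBc, card_insert_of_notMem (notMem_dezaB_self v), hβc]

theorem eq_and_eq_of_adj_of_neighborFinset_eq {u w p q : V}
    (hN : G.neighborFinset u = insert q ((G.neighborFinset w).erase p)) (hadj : G.Adj w u) :
    q = w ∧ p = u := by
  have hw : w ∈ G.neighborFinset u := by simpa using hadj.symm
  have hu : u ∉ G.neighborFinset u := by simp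
  rw [hN] at hw hu
  simp only [mem_insert, mem_erase, mem_neighborFinset, SimpleGraph.irrefl, and_false,
    or_false, not_or, not_and] at hw hu
  exact ⟨hw.symm, by_contra fun h => hu.2 (Ne.symm h) hadj⟩

theorem mem_dezaBc_comm {u x : V} : u ∈ dezaBc G b x ↔ x ∈ dezaBc G b u := by
  simp only [dezaBc, mem_insert, mem_dezaB_comm (u := u), eq_comm]

theorem exists_forall_notMem_of_isTypeA1 {x : V} (hA1 : IsTypeA1 G b x) :
    ∃ y ∈ G.neighborFinset x, ∀ m ∈ dezaB G b x, y ∉ G.neighborFinset m := by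
  obtain ⟨-, y, hy, hyB⟩ := hA1
  exact ⟨y, hy, fun m hm => (mem_sdiff.mp ((hyB m hm).symm ▸ mem_singleton_self y)).2⟩

theorem sdiff_commonNbhd_dezaBc_eq_biUnion (x : V) :
    G.neighborFinset x \ commonNbhd G (dezaBc G b x)
      = (dezaB G b x).biUnion fun xi => G.neighborFinset x \ G.neighborFinset xi := by
  ext v
  rw [mem_sdiff, mem_biUnion]
  constructor
  · rintro ⟨hv, hvS⟩
    have : ¬dezaB G b x ⊆ G.neighborFinset v := fun h =>
      hvS (mem_commonNbhd.mpr (insert_subset (mem_neighborFinset_comm.mp hv) h))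
    obtain ⟨xi, hxi, hvxi⟩ := not_subset.mp this
    exact ⟨xi, hxi, mem_sdiff.mpr ⟨hv, fun h => hvxi (mem_neighborFinset_comm.mp h)⟩⟩
  · rintro ⟨xi, hxi, hv⟩
    refine ⟨(mem_sdiff.mp hv).1, fun hS => (mem_sdiff.mp hv).2 ?_⟩
    exact mem_neighborFinset_comm.mp (mem_commonNbhd.mp hS (mem_insert_of_mem hxi))

namespace IsDezaGraph

theorem card_neighborFinset (hG : IsDezaGraph G n k b a) (v : V) :
    (G.neighborFinset v).card = k :=
  hG.2.2.1 v

theorem commonNbrs_eq_or (hG : IsDezaGraph G n k b a) {u v : V} (hne : u ≠ v) :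
    commonNbrs G u v = b ∨ commonNbrs G u v = a :=
  hG.2.2.2.2 u v hne

theorem le_commonNbrs (hG : IsDezaGraph G n k b a) {u v : V} (hne : u ≠ v) :
    a ≤ commonNbrs G u v := by
  rcases hG.commonNbrs_eq_or hne with h | h <;> have := hG.2.2.2.1 <;> omega

theorem mem_dezaB_of_lt (hG : IsDezaGraph G n k b a) {u v : V} (hne : u ≠ v)
    (h : a < commonNbrs G u v) : u ∈ dezaB G b v :=
  mem_dezaB.mpr ⟨hne, (hG.commonNbrs_eq_or hne).resolve_right h.ne'⟩

theorem mem_dezaB_of_le (hG : IsDezaGraph G n k b a) {u v : V} (hne : u ≠ v)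
    (h : b ≤ commonNbrs G u v) : u ∈ dezaB G b v := by
  refine mem_dezaB.mpr ⟨hne, ?_⟩
  rcases hG.commonNbrs_eq_or hne with h' | h' <;> have := hG.2.2.2.1 <;> omega

theorem commonNbrs_eq_of_notMem_dezaB (hG : IsDezaGraph G n k b a) {u v : V} (hne : u ≠ v)
    (h : u ∉ dezaB G b v) : commonNbrs G u v = a :=
  (hG.commonNbrs_eq_or hne).resolve_left fun hb => h (mem_dezaB.mpr ⟨hne, hb⟩)

theorem neighborFinset_ne (hG : IsDezaGraph G n k b a) (hk : k = b + 1) {u v : V}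
    (hne : u ≠ v) : G.neighborFinset u ≠ G.neighborFinset v := by
  intro h
  have hc : commonNbrs G u v = k := by rw [commonNbrs, h, inter_self, hG.card_neighborFinset]
  rcases hG.commonNbrs_eq_or hne with h' | h' <;> have := hG.2.2.2.1 <;> omega

theorem card_sdiff_neighborFinset_of_mem_dezaB (hG : IsDezaGraph G n k b a) (hk : k = b + 1)
    {u w : V} (h : u ∈ dezaB G b w) : (G.neighborFinset w \ G.neighborFinset u).card = 1 := by
  rw [card_sdiff, ← commonNbrs, (mem_dezaB.mp h).2, hG.card_neighborFinset]
  omega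

theorem exists_mem_notMem_of_mem_dezaB (hG : IsDezaGraph G n k b a) (hk : k = b + 1)
    {u w : V} (h : u ∈ dezaB G b w) : ∃ p ∈ G.neighborFinset w, p ∉ G.neighborFinset u := by
  obtain ⟨p, hp⟩ := card_pos.mp (hG.card_sdiff_neighborFinset_of_mem_dezaB hk h ▸ one_pos)
  exact ⟨p, mem_sdiff.mp hp⟩

theorem neighborFinset_eq_insert_erase (hG : IsDezaGraph G n k b a) (hk : k = b + 1)
    {u w p q : V} (h : u ∈ dezaB G b w) (hp : p ∈ G.neighborFinset w)
    (hpu : p ∉ G.neighborFinset u) (hq : q ∈ G.neighborFinset u)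
    (hqw : q ∉ G.neighborFinset w) :
    G.neighborFinset u = insert q ((G.neighborFinset w).erase p) := by
  refine eq_insert_erase_of_card_inter ?_ ?_ hp hpu hq hqw
  · have := (mem_dezaB.mp (mem_dezaB_comm.mp h)).2
    rw [commonNbrs] at this
    rw [this, hG.card_neighborFinset, hk]
  · rw [hG.card_neighborFinset, hG.card_neighborFinset]

theorem exists_neighborFinset_eq_insert_erase (hG : IsDezaGraph G n k b a) (hk : k = b + 1)
    {u w : V} (h : u ∈ dezaB G b w) : ∃ p ∈ G.neighborFinset w, ∃ q ∉ G.neighborFinset w,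
      G.neighborFinset u = insert q ((G.neighborFinset w).erase p) := by
  obtain ⟨p, hp, hpu⟩ := hG.exists_mem_notMem_of_mem_dezaB hk h
  obtain ⟨q, hq, hqw⟩ := hG.exists_mem_notMem_of_mem_dezaB hk (mem_dezaB_comm.mp h)
  exact ⟨p, hp, q, hqw, hG.neighborFinset_eq_insert_erase hk h hp hpu hq hqw⟩

theorem neighborFinset_eq_insert_erase_of_adj (hG : IsDezaGraph G n k b a) (hk : k = b + 1)
    {u w : V} (h : u ∈ dezaB G b w) (hadj : G.Adj w u) :
    G.neighborFinset u = insert w ((G.neighborFinset w).erase u) :=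
  hG.neighborFinset_eq_insert_erase hk h (by simpa using hadj) (by simp)
    (by simpa using hadj.symm) (by simp)

theorem adj_of_adj_of_mem_dezaB (hG : IsDezaGraph G n k b a) (hk : k = b + 1) {u u' w p' q' : V}
    (hu : u ∈ dezaB G b w) (hu' : u' ∈ dezaB G b w)
    (hN' : G.neighborFinset u' = insert q' ((G.neighborFinset w).erase p')) (hpu : p' ≠ u)
    (hadj : G.Adj w u) : G.Adj w u' := by
  have hu'u : u ∈ G.neighborFinset u' := by
    rw [hN']
    exact mem_insert_of_mem (mem_erase.mpr ⟨hpu.symm, by simpa using hadj⟩)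
  have hu'u : u' ∈ G.neighborFinset u := by simpa [adj_comm] using hu'u
  rw [hG.neighborFinset_eq_insert_erase_of_adj hk hu hadj] at hu'u
  rcases mem_insert.mp hu'u with h | h
  · exact absurd h (mem_dezaB.mp hu').1
  · exact (mem_neighborFinset ..).mp (mem_of_mem_erase h)

theorem not_adj_of_neighborFinset_eq (hG : IsDezaGraph G n k b a) (hk : k = b + 1)
    {u u' w p p' q q' : V} (hu : u ∈ dezaB G b w) (hu' : u' ∈ dezaB G b w)
    (hN : G.neighborFinset u = insert q ((G.neighborFinset w).erase p))
    (hN' : G.neighborFinset u' = insert q' ((G.neighborFinset w).erase p'))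
    (hpp : p ≠ p') (hqq : q ≠ q') : ¬G.Adj w u := by
  intro hadj
  obtain ⟨hqw, hpu⟩ := eq_and_eq_of_adj_of_neighborFinset_eq hN hadj
  have hadj' := hG.adj_of_adj_of_mem_dezaB hk hu hu' hN' (hpu ▸ Ne.symm hpp) hadj
  exact hqq (hqw.trans (eq_and_eq_of_adj_of_neighborFinset_eq hN' hadj').1.symm)

/-- `N(m)` contains `w, u, u'`, none of which lies in `N(w)`. -/
theorem add_three_le_of_not_adj (hG : IsDezaGraph G n k b a) {u u' w m : V}
    (hu : u ∈ dezaB G b w) (hu' : u' ∈ dezaB G b w) (hne : u ≠ u') (hwu : ¬G.Adj w u)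
    (hwu' : ¬G.Adj w u') (hmw : G.Adj w m) (hmu : G.Adj u m) (hmu' : G.Adj u' m) :
    a + 3 ≤ k := by
  have hwN : w ∉ G.neighborFinset w := G.notMem_neighborFinset_self w
  have huN : u ∉ G.neighborFinset w := by simpa using hwu
  have hu'N : u' ∉ G.neighborFinset w := by simpa using hwu'
  have hsub : insert w (insert u (insert u' (G.neighborFinset m ∩ G.neighborFinset w)))
      ⊆ G.neighborFinset m := by
    refine insert_subset ?_ (insert_subset ?_ (insert_subset ?_ inter_subset_left)) <;>
      simp only [mem_neighborFinset]
    exacts [hmw.symm, hmu.symm, hmu'.symm]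
  have := card_le_card hsub
  rw [card_insert_of_notMem, card_insert_of_notMem, card_insert_of_notMem,
    hG.card_neighborFinset] at this
  · have ha := hG.le_commonNbrs (u := m) (v := w) (by rintro rfl; exact G.irrefl hmw)
    rw [commonNbrs] at ha
    omega
  · exact fun h => hu'N (mem_inter.mp h).2
  · simp only [mem_insert, mem_inter, not_or]
    exact ⟨hne, fun h => huN h.2⟩
  · simp only [mem_insert, mem_inter, not_or]
    exact ⟨(mem_dezaB.mp hu).1.symm, (mem_dezaB.mp hu').1.symm, fun h => hwN h.2⟩

/-- Write `N(u) = N(w) - p + q` and `N(u') = N(w) - p' + q'`. If `p = p'` or `q = q'`, then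
`u, u'` share `k - 1` neighbours. Otherwise they share the `k - 2` vertices of
`N(w) - p - p'`, and a vertex `m` there shows `a ≤ k - 3`, so `u, u'` share more than `a`. -/
theorem mem_dezaB_of_mem_dezaB (hG : IsDezaGraph G n k b a) (hk : k = b + 1) (hk3 : 3 ≤ k)
    {u u' w : V} (hu : u ∈ dezaB G b w) (hu' : u' ∈ dezaB G b w) (hne : u ≠ u') :
    u' ∈ dezaB G b u := by
  obtain ⟨p, hp, q, hq, hN⟩ := hG.exists_neighborFinset_eq_insert_erase hk hu
  obtain ⟨p', hp', q', hq', hN'⟩ := hG.exists_neighborFinset_eq_insert_erase hk hu'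
  have hNw := hG.card_neighborFinset w
  by_cases hpp : p = p'
  · refine hG.mem_dezaB_of_le hne.symm ?_
    have hsub : (G.neighborFinset w).erase p ⊆ G.neighborFinset u' ∩ G.neighborFinset u := by
      rw [hN, hN', hpp]
      exact subset_inter (subset_insert _ _) (subset_insert _ _)
    have := card_le_card hsub
    rw [card_erase_of_mem hp] at this
    exact le_of_eq_of_le (by omega) this
  obtain ⟨C, hCdef⟩ : ∃ C, C = ((G.neighborFinset w).erase p).erase p' := ⟨_, rfl⟩
  have hC : C.card + 2 = k := by
    rw [hCdef, card_erase_of_mem (mem_erase.mpr ⟨Ne.symm hpp, hp'⟩), card_erase_of_mem hp]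
    omega
  have hCw : C ⊆ G.neighborFinset w := hCdef ▸ (erase_subset _ _).trans (erase_subset _ _)
  have hCsub : C ⊆ G.neighborFinset u' ∩ G.neighborFinset u := by
    rw [hN, hN', hCdef]
    exact subset_inter (erase_right_comm (a := p) ▸ (erase_subset _ _).trans (subset_insert _ _))
      ((erase_subset _ _).trans (subset_insert _ _))
  by_cases hqq : q = q'
  · refine hG.mem_dezaB_of_le hne.symm ?_
    have hsub : insert q C ⊆ G.neighborFinset u' ∩ G.neighborFinset u := by
      refine insert_subset (mem_inter.mpr ⟨?_, ?_⟩) hCsub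
      · rw [hN', hqq]; exact mem_insert_self _ _
      · rw [hN]; exact mem_insert_self _ _
    have := card_le_card hsub
    rw [card_insert_of_notMem fun h => hq (hCw h)] at this
    exact le_of_eq_of_le (by omega) this
  obtain ⟨m, hm⟩ : C.Nonempty := card_pos.mp (by omega)
  have hmu := mem_inter.mp (hCsub hm)
  have ha := hG.add_three_le_of_not_adj hu hu' hne
    (hG.not_adj_of_neighborFinset_eq hk hu hu' hN hN' hpp hqq)
    (hG.not_adj_of_neighborFinset_eq hk hu' hu hN' hN (Ne.symm hpp) (Ne.symm hqq))
    (by simpa using hCw hm) (by simpa using hmu.2) (by simpa using hmu.1)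
  exact hG.mem_dezaB_of_lt hne.symm (lt_of_lt_of_le (by omega) (card_le_card hCsub))

theorem dezaBc_subset_dezaBc (hG : IsDezaGraph G n k b a) (hk : k = b + 1) (hk3 : 3 ≤ k)
    {u x : V} (hu : u ∈ dezaBc G b x) : dezaBc G b u ⊆ dezaBc G b x := by
  rcases mem_insert.mp hu with rfl | hu
  · exact Subset.rfl
  intro v hv
  rcases mem_insert.mp hv with rfl | hv
  · exact mem_insert_of_mem hu
  by_cases hvx : v = x
  · exact hvx ▸ mem_insert_self _ _
  · exact mem_insert_of_mem (mem_dezaB_comm.mp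
      (hG.mem_dezaB_of_mem_dezaB hk hk3 hv (mem_dezaB_comm.mp hu) hvx))

theorem dezaBc_eq_dezaBc (hG : IsDezaGraph G n k b a) (hk : k = b + 1) (hk3 : 3 ≤ k)
    {u x : V} (hu : u ∈ dezaBc G b x) : dezaBc G b u = dezaBc G b x :=
  (hG.dezaBc_subset_dezaBc hk hk3 hu).antisymm
    (hG.dezaBc_subset_dezaBc hk hk3 (mem_dezaBc_comm.mp hu))

theorem three_le_of_mem_commonNbhd (hG : IsDezaGraph G n k b a)
    (hβc : ∀ v : V, (dezaB G b v).card = β) (hβ : 1 < β) {x w : V}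
    (hw : w ∈ commonNbhd G (dezaBc G b x)) : 3 ≤ k := by
  have := card_le_card (mem_commonNbhd.mp hw)
  rw [card_dezaBc hβc, hG.card_neighborFinset] at this
  omega

theorem mem_commonNbhd_of_mem_dezaB (hG : IsDezaGraph G n k b a) (hk : k = b + 1)
    (hβc : ∀ v : V, (dezaB G b v).card = β) (hβ : 1 < β) {x w w' : V}
    (hK : ∀ w ∈ commonNbhd G (dezaBc G b x), ∀ w', ∀ p ∈ dezaBc G b x, ¬G.Adj w w' →
      (G.neighborFinset w).erase p ⊆ G.neighborFinset w' → G.Adj p w')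
    (hw : w ∈ commonNbhd G (dezaBc G b x)) (hw' : w' ∈ dezaB G b w) :
    w' ∈ commonNbhd G (dezaBc G b x) := by
  by_contra hw'S
  obtain ⟨p, hp, q, hq, hN⟩ := hG.exists_neighborFinset_eq_insert_erase hk hw'
  have hKw := mem_commonNbhd.mp hw
  have hpK : p ∈ dezaBc G b x := by
    by_contra hpK
    refine hw'S (mem_commonNbhd.mpr fun m hm => ?_)
    rw [hN]
    exact mem_insert_of_mem (mem_erase.mpr ⟨fun h => hpK (h ▸ hm), hKw hm⟩)
  have hnadj : ¬G.Adj w w' := by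
    intro hadj
    have hpw' := (eq_and_eq_of_adj_of_neighborFinset_eq hN hadj).2
    have hwK := hG.dezaBc_subset_dezaBc hk (hG.three_le_of_mem_commonNbhd hβc hβ hw)
      (hpw' ▸ hpK) (mem_insert_of_mem (mem_dezaB_comm.mp hw'))
    exact notMem_of_mem_commonNbhd hw hwK
  have hpw' : p ∉ G.neighborFinset w' := by
    rw [hN, mem_insert, mem_erase]
    exact fun h => h.elim (fun h => hq (h ▸ hp)) fun h => h.1 rfl
  exact hpw' (by simpa [adj_comm] using hK w hw w' p hpK hnadj (hN ▸ subset_insert _ _))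

/-- `hK` rules out the only way in which a `b`-partner of a vertex of
`S = commonNbhd G (dezaBc G b x)` could leave `S`; so `S` is a union of classes `B[w]`. -/
theorem dvd_card_commonNbhd (hG : IsDezaGraph G n k b a) (hk : k = b + 1)
    (hβc : ∀ v : V, (dezaB G b v).card = β) (hβ : 1 < β) {x : V}
    (hK : ∀ w ∈ commonNbhd G (dezaBc G b x), ∀ w', ∀ p ∈ dezaBc G b x, ¬G.Adj w w' →
      (G.neighborFinset w).erase p ⊆ G.neighborFinset w' → G.Adj p w') :
    β + 1 ∣ (commonNbhd G (dezaBc G b x)).card := by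
  refine dvd_card_of_blocks (dezaBc G b) (fun w _ => self_mem_dezaBc w) ?_ ?_
    fun w _ => card_dezaBc hβc w
  · intro w hw v hv
    rcases mem_insert.mp hv with rfl | hv
    · exact hw
    · exact hG.mem_commonNbhd_of_mem_dezaB hk hβc hβ hK hw hv
  · intro w hw w' hw'
    exact hG.dezaBc_eq_dezaBc hk (hG.three_le_of_mem_commonNbhd hβc hβ hw) hw'

section Core

variable {K S₀ : Finset V}

theorem inter_eq_of_forall_eq_insert (hG : IsDezaGraph G n k b a) (hk : k = b + 1)
    (hcore : ∀ m ∈ K, ∃ e ∉ S₀, G.neighborFinset m = insert e S₀) {m₁ m₂ : V} (hm₁ : m₁ ∈ K)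
    (hm₂ : m₂ ∈ K) (hne : m₁ ≠ m₂) : G.neighborFinset m₁ ∩ G.neighborFinset m₂ = S₀ := by
  obtain ⟨e₁, he₁, hN₁⟩ := hcore m₁ hm₁
  obtain ⟨e₂, he₂, hN₂⟩ := hcore m₂ hm₂
  have he : e₁ ≠ e₂ := fun h => hG.neighborFinset_ne hk hne (by rw [hN₁, hN₂, h])
  rw [hN₁, hN₂, insert_inter_of_notMem (by simp [he, he₁]), inter_insert_of_notMem he₂,
    inter_self]

theorem commonNbhd_eq_of_forall_eq_insert (hG : IsDezaGraph G n k b a) (hk : k = b + 1)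
    (hK : 1 < K.card) (hcore : ∀ m ∈ K, ∃ e ∉ S₀, G.neighborFinset m = insert e S₀) :
    commonNbhd G K = S₀ := by
  obtain ⟨m₁, hm₁, m₂, hm₂, hne⟩ := one_lt_card.mp hK
  ext w
  rw [mem_commonNbhd]
  constructor
  · intro hw
    rw [← hG.inter_eq_of_forall_eq_insert hk hcore hm₁ hm₂ hne, mem_inter]
    exact ⟨mem_neighborFinset_comm.mp (hw hm₁), mem_neighborFinset_comm.mp (hw hm₂)⟩
  · intro hw m hm
    obtain ⟨e, -, hN⟩ := hcore m hm
    exact mem_neighborFinset_comm.mp (hN ▸ mem_insert_of_mem hw)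

theorem adj_of_forall_eq_insert (hG : IsDezaGraph G n k b a) (hk : k = b + 1)
    (hK : 2 < K.card) (hcore : ∀ m ∈ K, ∃ e ∉ S₀, G.neighborFinset m = insert e S₀)
    {w w' p : V} (hw : w ∈ commonNbhd G K) (hp : p ∈ K)
    (hsub : (G.neighborFinset w).erase p ⊆ G.neighborFinset w') : G.Adj p w' := by
  have hKp : 1 < (K.erase p).card := by rw [card_erase_of_mem hp]; omega
  obtain ⟨m₁, hm₁, m₂, hm₂, hne⟩ := one_lt_card.mp hKp
  have hw'N : ∀ m ∈ K.erase p, w' ∈ G.neighborFinset m := fun m hm =>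
    mem_neighborFinset_comm.mp (hsub (mem_erase.mpr
      ⟨(mem_erase.mp hm).1, mem_commonNbhd.mp hw (mem_of_mem_erase hm)⟩))
  have hw'S : w' ∈ S₀ := by
    rw [← hG.inter_eq_of_forall_eq_insert hk hcore (mem_of_mem_erase hm₁)
      (mem_of_mem_erase hm₂) hne]
    exact mem_inter.mpr ⟨hw'N m₁ hm₁, hw'N m₂ hm₂⟩
  obtain ⟨e, -, hN⟩ := hcore p hp
  simpa using (hN ▸ mem_insert_of_mem hw'S : w' ∈ G.neighborFinset p)

end Core

theorem forall_eq_insert_erase_of_forall_notMem (hG : IsDezaGraph G n k b a) (hk : k = b + 1)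
    {x y : V} (hy : y ∈ G.neighborFinset x)
    (hyB : ∀ m ∈ dezaB G b x, y ∉ G.neighborFinset m) :
    ∀ m ∈ dezaBc G b x, ∃ e ∉ (G.neighborFinset x).erase y,
      G.neighborFinset m = insert e ((G.neighborFinset x).erase y) := by
  intro m hm
  rcases mem_insert.mp hm with rfl | hm
  · exact ⟨y, notMem_erase y _, (insert_erase hy).symm⟩
  obtain ⟨q, hq, hqx⟩ := hG.exists_mem_notMem_of_mem_dezaB hk (mem_dezaB_comm.mp hm)
  exact ⟨q, fun h => hqx (mem_of_mem_erase h),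
    hG.neighborFinset_eq_insert_erase hk hm hy (hyB m hm) hq hqx⟩

theorem dvd_sub_one_of_forall_notMem (hG : IsDezaGraph G n k b a) (hk : k = b + 1)
    (hβc : ∀ v : V, (dezaB G b v).card = β) (hβ : 1 < β) {x y : V}
    (hy : y ∈ G.neighborFinset x) (hyB : ∀ m ∈ dezaB G b x, y ∉ G.neighborFinset m) :
    ((β : ℤ) + 1) ∣ (k : ℤ) - 1 := by
  have hcore := hG.forall_eq_insert_erase_of_forall_notMem hk hy hyB
  have hK := card_dezaBc hβc x
  have hS := hG.commonNbhd_eq_of_forall_eq_insert hk (by omega) hcore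
  refine natCast_add_one_dvd_sub (c := ((G.neighborFinset x).erase y).card) (j := 1) ?_ ?_
  · rw [← hS]
    exact hG.dvd_card_commonNbhd hk hβc hβ fun w hw w' p hp _ hsub =>
      hG.adj_of_forall_eq_insert hk (by omega) hcore hw hp hsub
  · rw [card_erase_of_mem hy, hG.card_neighborFinset]
    omega

theorem exists_forall_notMem_of_isTypeC (hG : IsDezaGraph G n k b a) (hk : k = b + 1) {x : V}
    (hC : IsTypeC G b x) :
    ∃ y ∈ G.neighborFinset x, ∀ m ∈ dezaB G b x, y ∉ G.neighborFinset m := by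
  obtain ⟨y, hy⟩ := card_eq_one.mp hC
  have hyx := mem_inter.mp (hy ▸ mem_singleton_self y)
  refine ⟨y, hyx.2, fun m hm hym => ?_⟩
  have hmy : m ≠ y := by
    rintro rfl
    exact G.notMem_neighborFinset_self m hym
  have hmx : m ∉ G.neighborFinset x := fun h =>
    hmy (mem_singleton.mp (hy ▸ mem_inter.mpr ⟨hm, h⟩))
  have hmN : m ∈ G.neighborFinset y := mem_neighborFinset_comm.mp hym
  rw [hG.neighborFinset_eq_insert_erase_of_adj hk hyx.1 (by simpa using hyx.2), mem_insert]
    at hmN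
  exact hmN.elim (mem_dezaB.mp hm).1 fun h => hmx (mem_of_mem_erase h)

section TypeB

variable {x : V}

theorem neighborFinset_eq_erase_of_isTypeB (hG : IsDezaGraph G n k b a) (hk : k = b + 1)
    (hB : IsTypeB G b x) {m : V} (hm : m ∈ dezaBc G b x) :
    G.neighborFinset m = (insert x (G.neighborFinset x)).erase m := by
  rcases mem_insert.mp hm with rfl | hm
  · rw [erase_insert (G.notMem_neighborFinset_self m)]
  · rw [hG.neighborFinset_eq_insert_erase_of_adj hk hm (by simpa using hB hm),
      erase_insert_of_ne (mem_dezaB.mp hm).1.symm]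

theorem commonNbhd_eq_of_isTypeB (hG : IsDezaGraph G n k b a) (hk : k = b + 1)
    (hB : IsTypeB G b x) :
    commonNbhd G (dezaBc G b x) = insert x (G.neighborFinset x) \ dezaBc G b x := by
  ext w
  rw [mem_sdiff]
  constructor
  · intro hw
    exact ⟨mem_insert_of_mem (commonNbhd_subset_neighborFinset (self_mem_dezaBc x) hw),
      notMem_of_mem_commonNbhd hw⟩
  · rintro ⟨hw, hwK⟩
    refine mem_commonNbhd.mpr fun m hm => ?_
    rw [mem_neighborFinset_comm, hG.neighborFinset_eq_erase_of_isTypeB hk hB hm]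
    exact mem_erase.mpr ⟨fun h => hwK (h ▸ hm), hw⟩

theorem adj_of_isTypeB (hG : IsDezaGraph G n k b a) (hk : k = b + 1)
    (hβc : ∀ v : V, (dezaB G b v).card = β) (hβ : 0 < β) (hB : IsTypeB G b x) {w w' p : V}
    (hw : w ∈ commonNbhd G (dezaBc G b x)) (hp : p ∈ dezaBc G b x) (hww' : ¬G.Adj w w')
    (hsub : (G.neighborFinset w).erase p ⊆ G.neighborFinset w') : G.Adj p w' := by
  obtain ⟨m, hm⟩ : ((dezaBc G b x).erase p).Nonempty := by
    rw [← card_pos, card_erase_of_mem hp, card_dezaBc hβc]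
    omega
  have hKw := mem_commonNbhd.mp hw
  have hw'm : w' ∈ G.neighborFinset m :=
    mem_neighborFinset_comm.mp (hsub (mem_erase.mpr ⟨(mem_erase.mp hm).1,
      hKw (mem_of_mem_erase hm)⟩))
  rw [hG.neighborFinset_eq_erase_of_isTypeB hk hB (mem_of_mem_erase hm)] at hw'm
  have hw'p : w' ≠ p := by
    rintro rfl
    exact hww' (by simpa using hKw hp)
  have : w' ∈ G.neighborFinset p := by
    rw [hG.neighborFinset_eq_erase_of_isTypeB hk hB hp]
    exact mem_erase.mpr ⟨hw'p, mem_of_mem_erase hw'm⟩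
  simpa using this

theorem dvd_sub_of_isTypeB (hG : IsDezaGraph G n k b a) (hk : k = b + 1)
    (hβc : ∀ v : V, (dezaB G b v).card = β) (hβ : 1 < β) (hB : IsTypeB G b x) :
    ((β : ℤ) + 1) ∣ (k : ℤ) - β := by
  have hKx : dezaBc G b x ⊆ insert x (G.neighborFinset x) := insert_subset_insert x hB
  have hK := card_le_card hKx
  rw [card_dezaBc hβc, card_insert_of_notMem (G.notMem_neighborFinset_self x),
    hG.card_neighborFinset] at hK
  refine natCast_add_one_dvd_sub (c := (commonNbhd G (dezaBc G b x)).card) (j := β) ?_ ?_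
  · exact hG.dvd_card_commonNbhd hk hβc hβ fun w hw w' p hp hww' hsub =>
      hG.adj_of_isTypeB hk hβc (by omega) hB hw hp hww' hsub
  · rw [hG.commonNbhd_eq_of_isTypeB hk hB, card_sdiff_of_subset hKx, card_dezaBc hβc,
      card_insert_of_notMem (G.notMem_neighborFinset_self x), hG.card_neighborFinset]
    omega

end TypeB

section TypeA2

variable {x z : V}

theorem mem_sdiff_of_isTypeA2
    (hz : ∀ xi ∈ dezaB G b x, G.neighborFinset xi \ G.neighborFinset x = {z}) {xi : V}
    (hxi : xi ∈ dezaB G b x) : z ∈ G.neighborFinset xi ∧ z ∉ G.neighborFinset x :=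
  mem_sdiff.mp ((hz xi hxi).symm ▸ mem_singleton_self z)

theorem neighborFinset_subset_of_isTypeA2
    (hz : ∀ xi ∈ dezaB G b x, G.neighborFinset xi \ G.neighborFinset x = {z}) {xi : V}
    (hxi : xi ∈ dezaB G b x) : G.neighborFinset xi ⊆ insert z (G.neighborFinset x) := by
  intro v hv
  by_cases hvx : v ∈ G.neighborFinset x
  · exact mem_insert_of_mem hvx
  · have hvz : v ∈ G.neighborFinset xi \ G.neighborFinset x := mem_sdiff.mpr ⟨hv, hvx⟩
    rw [hz xi hxi, mem_singleton] at hvz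
    rw [hvz]
    exact mem_insert_self z _

theorem neighborFinset_eq_of_isTypeA2 (hG : IsDezaGraph G n k b a) (hk : k = b + 1)
    (hz : ∀ xi ∈ dezaB G b x, G.neighborFinset xi \ G.neighborFinset x = {z}) {xi v : V}
    (hxi : xi ∈ dezaB G b x) (hv : v ∈ G.neighborFinset x) (hvxi : v ∉ G.neighborFinset xi) :
    G.neighborFinset xi = insert z ((G.neighborFinset x).erase v) :=
  have hzxi := mem_sdiff_of_isTypeA2 hz hxi
  hG.neighborFinset_eq_insert_erase hk hxi hv hvxi hzxi.1 hzxi.2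

theorem card_sdiff_commonNbhd_of_isTypeA2 (hG : IsDezaGraph G n k b a) (hk : k = b + 1)
    (hβc : ∀ v : V, (dezaB G b v).card = β)
    (hz : ∀ xi ∈ dezaB G b x, G.neighborFinset xi \ G.neighborFinset x = {z}) :
    (G.neighborFinset x \ commonNbhd G (dezaBc G b x)).card = β := by
  rw [sdiff_commonNbhd_dezaBc_eq_biUnion, card_biUnion, sum_congr rfl fun xi hxi =>
    hG.card_sdiff_neighborFinset_of_mem_dezaB hk hxi, sum_const, smul_eq_mul, mul_one, hβc]
  intro xi hxi xj hxj hne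
  refine disjoint_left.mpr fun v hvi hvj => ?_
  obtain ⟨hv, hvxi⟩ := mem_sdiff.mp hvi
  exact hG.neighborFinset_ne hk hne ((hG.neighborFinset_eq_of_isTypeA2 hk hz hxi hv hvxi).trans
    (hG.neighborFinset_eq_of_isTypeA2 hk hz hxj hv (mem_sdiff.mp hvj).2).symm)

/-- For `t ≠ z` pick `xᵢ ∈ B(x)` with `N(xᵢ) = N(x) - t + z`; as `s` lies outside the class
`B[x]`, it has `a` common neighbours with both `x` and `xᵢ`. -/
theorem mem_neighborFinset_iff_of_isTypeA2 (hG : IsDezaGraph G n k b a) (hk : k = b + 1)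
    (hβc : ∀ v : V, (dezaB G b v).card = β) (hβ : 1 < β)
    (hz : ∀ xi ∈ dezaB G b x, G.neighborFinset xi \ G.neighborFinset x = {z}) {s t : V}
    (hs : s ∈ commonNbhd G (dezaBc G b x))
    (ht : t ∈ insert z (G.neighborFinset x \ commonNbhd G (dezaBc G b x))) :
    t ∈ G.neighborFinset s ↔ z ∈ G.neighborFinset s := by
  rcases mem_insert.mp ht with rfl | ht
  · rfl
  rw [sdiff_commonNbhd_dezaBc_eq_biUnion, mem_biUnion] at ht
  obtain ⟨xi, hxi, ht⟩ := ht
  obtain ⟨htx, htxi⟩ := mem_sdiff.mp ht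
  have hk3 := hG.three_le_of_mem_commonNbhd hβc hβ hs
  have hsK := notMem_of_mem_commonNbhd hs
  have hxiK : xi ∈ dezaBc G b x := mem_insert_of_mem hxi
  have hcx := hG.commonNbrs_eq_of_notMem_dezaB (u := s) (v := x)
    (fun h => hsK (by rw [h]; exact self_mem_dezaBc x)) (fun h => hsK (mem_insert_of_mem h))
  have hcxi := hG.commonNbrs_eq_of_notMem_dezaB (u := s) (v := xi) (fun h => hsK (by rwa [h]))
    (fun h => hsK (hG.dezaBc_subset_dezaBc hk hk3 hxiK (mem_insert_of_mem h)))
  refine mem_iff_mem_of_card_inter_insert_erase htx (mem_sdiff_of_isTypeA2 hz hxi).2 ?_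
  rw [← hG.neighborFinset_eq_of_isTypeA2 hk hz hxi htx htxi]
  exact hcxi.trans hcx.symm

theorem mem_dezaB_of_isTypeA2 (hG : IsDezaGraph G n k b a)
    (hβc : ∀ v : V, (dezaB G b v).card = β) (hβ : 0 < β)
    (hz : ∀ xi ∈ dezaB G b x, G.neighborFinset xi \ G.neighborFinset x = {z}) {w t : V}
    (hw : w ∈ commonNbhd G (dezaBc G b x))
    (hT : ∀ t ∈ insert z (G.neighborFinset x \ commonNbhd G (dezaBc G b x)),
      t ∉ G.neighborFinset w)
    (ht : t ∈ insert z (G.neighborFinset x \ commonNbhd G (dezaBc G b x)))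
    (htS : ∀ s ∈ G.neighborFinset w ∩ commonNbhd G (dezaBc G b x), t ∈ G.neighborFinset s) :
    t ∈ dezaB G b w := by
  have hSx : commonNbhd G (dezaBc G b x) ⊆ G.neighborFinset x :=
    commonNbhd_subset_neighborFinset (self_mem_dezaBc x)
  have hwK := notMem_of_mem_commonNbhd hw
  obtain ⟨xi, hxi⟩ : (dezaB G b x).Nonempty := card_pos.mp (by rw [hβc]; exact hβ)
  have hzxi := mem_sdiff_of_isTypeA2 hz hxi
  have hinter : G.neighborFinset w ∩ commonNbhd G (dezaBc G b x)
      = G.neighborFinset w ∩ G.neighborFinset x := by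
    refine Subset.antisymm (inter_subset_inter_left hSx) fun v hv => ?_
    obtain ⟨hvw, hvx⟩ := mem_inter.mp hv
    exact mem_inter.mpr ⟨hvw, by_contra fun hvS =>
      hT v (mem_insert_of_mem (mem_sdiff.mpr ⟨hvx, hvS⟩)) hvw⟩
  have hca : (G.neighborFinset w ∩ commonNbhd G (dezaBc G b x)).card = a := by
    rw [hinter, ← commonNbrs]
    exact hG.commonNbrs_eq_of_notMem_dezaB (fun h => hwK (by rw [h]; exact self_mem_dezaBc x))
      fun h => hwK (mem_insert_of_mem h)
  obtain ⟨m, hmK, hmt, htS'⟩ : ∃ m ∈ dezaBc G b x, m ∈ G.neighborFinset t ∧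
      t ∉ commonNbhd G (dezaBc G b x) := by
    rcases mem_insert.mp ht with rfl | ht
    · exact ⟨xi, mem_insert_of_mem hxi, mem_neighborFinset_comm.mp hzxi.1,
        fun h => hzxi.2 (hSx h)⟩
    · exact ⟨x, self_mem_dezaBc x, mem_neighborFinset_comm.mp (mem_sdiff.mp ht).1,
        (mem_sdiff.mp ht).2⟩
  have hsub : insert m (G.neighborFinset w ∩ commonNbhd G (dezaBc G b x))
      ⊆ G.neighborFinset t ∩ G.neighborFinset w :=
    insert_subset (mem_inter.mpr ⟨hmt, mem_commonNbhd.mp hw hmK⟩) fun s hs =>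
      mem_inter.mpr ⟨mem_neighborFinset_comm.mp (htS s hs), (mem_inter.mp hs).1⟩
  have := card_le_card hsub
  rw [card_insert_of_notMem fun h => notMem_of_mem_commonNbhd (mem_inter.mp h).2 hmK, hca]
    at this
  exact hG.mem_dezaB_of_lt (fun h => htS' (h ▸ hw)) this

/-- Otherwise `w'` lies in `T = {z} ∪ (N(x) \ S)`, where `S = commonNbhd G (dezaBc G b x)`. All
of `T` then looks alike from `S`, so each `t ∈ T` shares with `w` the `a` vertices of `N(w) ∩ S`
and a vertex of `B[x]`; hence `T ⊆ B(w)`, but `|T| = β + 1`. -/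
theorem adj_of_isTypeA2 (hG : IsDezaGraph G n k b a) (hk : k = b + 1)
    (hβc : ∀ v : V, (dezaB G b v).card = β) (hβ : 1 < β)
    (hz : ∀ xi ∈ dezaB G b x, G.neighborFinset xi \ G.neighborFinset x = {z}) {w w' p : V}
    (hw : w ∈ commonNbhd G (dezaBc G b x)) (hp : p ∈ dezaBc G b x) (hww' : ¬G.Adj w w')
    (hsub : (G.neighborFinset w).erase p ⊆ G.neighborFinset w') : G.Adj p w' := by
  by_contra hpw'
  have hpw'N : p ∉ G.neighborFinset w' := by simpa [adj_comm] using hpw'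
  have hKw := mem_commonNbhd.mp hw
  obtain ⟨xi, hxi⟩ : ((dezaB G b x).erase p).Nonempty := by
    refine card_pos.mp (lt_of_lt_of_le ?_ pred_card_le_card_erase)
    rw [hβc]
    omega
  have hxiB := mem_of_mem_erase hxi
  have hw'T : w' ∈ insert z (G.neighborFinset x \ commonNbhd G (dezaBc G b x)) := by
    have hw'xi : w' ∈ G.neighborFinset xi := mem_neighborFinset_comm.mp
      (hsub (mem_erase.mpr ⟨(mem_erase.mp hxi).1, hKw (mem_insert_of_mem hxiB)⟩))
    rcases mem_insert.mp (neighborFinset_subset_of_isTypeA2 hz hxiB hw'xi) with h | h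
    · exact h ▸ mem_insert_self _ _
    · exact mem_insert_of_mem (mem_sdiff.mpr ⟨h, fun hS => hpw'N (mem_commonNbhd.mp hS hp)⟩)
  have hiff := fun {s t} => hG.mem_neighborFinset_iff_of_isTypeA2 hk hβc hβ hz (s := s) (t := t)
  have hw'w : w' ∉ G.neighborFinset w := by simpa using hww'
  have hT : ∀ t ∈ insert z (G.neighborFinset x \ commonNbhd G (dezaBc G b x)),
      t ∉ G.neighborFinset w := fun t ht h => hw'w ((hiff hw hw'T).mpr ((hiff hw ht).mp h))
  have hTB : insert z (G.neighborFinset x \ commonNbhd G (dezaBc G b x)) ⊆ dezaB G b w := by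
    refine fun t ht => hG.mem_dezaB_of_isTypeA2 hβc (by omega) hz hw hT ht fun s hs => ?_
    obtain ⟨hsw, hsS⟩ := mem_inter.mp hs
    have hsp : s ≠ p := fun h => notMem_of_mem_commonNbhd hsS (h ▸ hp)
    have hw's := mem_neighborFinset_comm.mp (hsub (mem_erase.mpr ⟨hsp, hsw⟩))
    exact (hiff hsS ht).mpr ((hiff hsS hw'T).mp hw's)
  have := card_le_card hTB
  rw [card_insert_of_notMem fun h => (mem_sdiff_of_isTypeA2 hz hxiB).2 (mem_sdiff.mp h).1,
    hG.card_sdiff_commonNbhd_of_isTypeA2 hk hβc hz, hβc] at this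
  omega

theorem dvd_sub_of_isTypeA2 (hG : IsDezaGraph G n k b a) (hk : k = b + 1)
    (hβc : ∀ v : V, (dezaB G b v).card = β) (hβ : 1 < β)
    (hz : ∀ xi ∈ dezaB G b x, G.neighborFinset xi \ G.neighborFinset x = {z}) :
    ((β : ℤ) + 1) ∣ (k : ℤ) - β := by
  refine natCast_add_one_dvd_sub (c := (commonNbhd G (dezaBc G b x)).card) (j := β)
    (hG.dvd_card_commonNbhd hk hβc hβ fun w hw w' p hp hww' hsub =>
      hG.adj_of_isTypeA2 hk hβc hβ hz hw hp hww' hsub) ?_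
  have hSx : commonNbhd G (dezaBc G b x) ⊆ G.neighborFinset x :=
    commonNbhd_subset_neighborFinset (self_mem_dezaBc x)
  have := card_sdiff_add_card_eq_card hSx
  rw [hG.card_sdiff_commonNbhd_of_isTypeA2 hk hβc hz, hG.card_neighborFinset] at this
  omega

end TypeA2

end IsDezaGraph

end Deza

theorem stmt16 {V : Type u} [Fintype V] [DecidableEq V] (G : SimpleGraph V)
    [DecidableRel G.Adj] (n k b a β : ℕ)
    (hG : IsStrictlyDezaGraph G n k b a) (hk : k = b + 1)
    (hβ : ∀ v : V, 1 < (dezaB G b v).card)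
    (hβc : ∀ v : V, (dezaB G b v).card = β) :
    ((∃ x : V, IsTypeA1 G b x ∨ IsTypeC G b x) →
      ((β : ℤ) + 1) ∣ ((k : ℤ) - 1)) ∧
    ((∃ x : V, IsTypeA2 G b x ∨ IsTypeB G b x) →
      ((β : ℤ) + 1) ∣ ((k : ℤ) - (β : ℤ))) := by
  have hDeza := hG.1
  have hβ' (x : V) : 1 < β := hβc x ▸ hβ x
  refine ⟨fun ⟨x, hx⟩ => ?_, fun ⟨x, hx⟩ => ?_⟩
  · obtain ⟨y, hy, hyB⟩ := hx.elim exists_forall_notMem_of_isTypeA1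
      (hDeza.exists_forall_notMem_of_isTypeC hk)
    exact hDeza.dvd_sub_one_of_forall_notMem hk hβc (hβ' x) hy hyB
  · rcases hx with ⟨-, z, -, hz⟩ | hB
    · exact hDeza.dvd_sub_of_isTypeA2 hk hβc (hβ' x) hz
    · exact hDeza.dvd_sub_of_isTypeB hk hβc (hβ' x) hB
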